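/- Let u1, w1, y1, u2, w2, y2 be words over B and v1, x1, v2, x2 nonempty words with |v1| + |x1| = |v2| + |x2|, |v1| ≠ |v2| and |x1| ≠ |x2|, such that u1·v1^i·w1·x1^i·y1 = u2·v2^i·w2·x2^i·y2 for all i ∈ ℕ. Then there exist a nonempty word x and contexts f1, f2 such that for every i ≥ 1 there exists k ∈ ℕ with v1^i·w1·x1^i = f1[x^k] and v2^i·w2·x2^i = f2[x^k]. -/

import Mathlib

/-- `wpow x n` is the word `x` repeated `n` times (`x^n`). -/
def wpow {B : Type*} (x : List B) : ℕ → List B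
  | 0 => []
  | n + 1 => x ++ wpow x n

/-- Length of a longest common factor (infix) of `u` and `v`. -/
noncomputable def lcfLen {B : Type*} (u v : List B) : ℕ :=
  sSup {n | ∃ w : List B, w.length = n ∧ w <:+: u ∧ w <:+: v}

/-- The factor distance `dist_f(u,v) = |u| + |v| - 2·|lcf(u,v)|`. -/
noncomputable def distf {B : Type*} (u v : List B) : ℕ :=
  u.length + v.length - 2 * lcfLen u v

/-- A context is a pair of words; `capp c w = c.1 ++ w ++ c.2` is `c[w]`. -/
def capp {B : Type*} (c : List B × List B) (w : List B) : List B :=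
  c.1 ++ w ++ c.2

/-- The length `|c|` of a context. -/
def clen {B : Type*} (c : List B × List B) : ℕ :=
  c.1.length + c.2.length

/-- Product of contexts: `(c·d)[w] = c[d[w]]`. -/
def cmul {B : Type*} (c d : List B × List B) : List B × List B :=
  (c.1 ++ d.1, d.2 ++ c.2)

/-- Power of a context: `c^n[w] = l^n ++ w ++ r^n`. -/
def cpow {B : Type*} (c : List B × List B) (n : ℕ) : List B × List B :=
  (wpow c.1 n, wpow c.2 n)

/-- A nonempty word `x` is primitive if `x = y^p` with `p ≥ 1` implies `p = 1`. -/
def Primitive {B : Type*} (x : List B) : Prop :=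
  x ≠ [] ∧ ∀ (y : List B) (p : ℕ), 1 ≤ p → x = wpow y p → p = 1

/-- Words `x` and `y` are conjugate. -/
def Conj {B : Type*} (x y : List B) : Prop :=
  ∃ t1 t2 : List B, x = t1 ++ t2 ∧ y = t2 ++ t1

/-- The triple of contexts `(c, d, e)` is `x`-commuting: there is a context `f`
such that for every `i ≥ 1` there is `k` with `(e^i·d·c)[ε] = f[x^k]`. -/
def XCommuting {B : Type*} (c d e : List B × List B) (x : List B) : Prop :=
  ∃ f : List B × List B, ∀ i : ℕ, 1 ≤ i → ∃ k : ℕ,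
    capp (cmul (cpow e i) (cmul d c)) [] = capp f (wpow x k)

/-! Assume `|v2| < |v1|`, hence `|x1| < |x2|`. The common word
`S i = u1 v1^i w1 x1^i y1` is read from the left by `L = u1 v1 v1 ⋯ = u2 v2 v2 ⋯` on its first
`|u1| + i|v1|` letters, and from the right by `R = y2ᴿ x2ᴿ x2ᴿ ⋯ = y1ᴿ x1ᴿ x1ᴿ ⋯` on its last
`|y2| + i|x2|` letters; as `|v1| + |x2| > |v1| + |x1|`, these ranges overlap more and more.
Through the overlap `L` and `R` inherit each other's eventual periods, so both are eventually
`G`-periodic for `G = gcd(|v1|, |v2|, |x1|, |x2|)`, and then `G`-periodic right from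
`min(|u1|, |u2|)`, resp. `min(|y1|, |y2|)`. So for large `i` the middle of `S i` is `G`-periodic,
and `v1^i w1 x1^i`, `v2^i w2 x2^i` are factors of it whose lengths grow in steps that are
multiples of `G`: both are powers of one word `x` of length `G` in fixed contexts. -/

open List

section Words

variable {α : Type*}

theorem length_wpow (x : List α) (n : ℕ) : (wpow x n).length = n * x.length := by
  induction n with
  | zero => simp [wpow]
  | succ n ih => simp [wpow, ih, Nat.succ_mul, Nat.add_comm]

theorem wpow_add (x : List α) (m n : ℕ) : wpow x (m + n) = wpow x m ++ wpow x n := by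
  induction m with
  | zero => simp [wpow]
  | succ m ih => simp [Nat.succ_add, wpow, ih]

theorem reverse_wpow (x : List α) (n : ℕ) : (wpow x n).reverse = wpow x.reverse n := by
  induction n with
  | zero => simp [wpow]
  | succ n ih =>
    rw [wpow, reverse_append, ih, wpow_add]
    simp [wpow]

theorem getElem?_wpow (x : List α) {m n : ℕ} (hn : n < m * x.length) :
    (wpow x m)[n]? = x[n % x.length]? := by
  induction m generalizing n with
  | zero => simp at hn
  | succ m ih =>
    rw [wpow]
    rcases lt_or_ge n x.length with hnx | hnx
    · rw [getElem?_append_left hnx, Nat.mod_eq_of_lt hnx]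
    · rw [getElem?_append_right hnx, ih (by rw [Nat.succ_mul] at hn; omega),
        ← Nat.mod_eq_sub_mod hnx]

theorem wpow_append_succ (s t : List α) (m : ℕ) :
    wpow (s ++ t) (m + 1) = s ++ wpow (t ++ s) m ++ t := by
  induction m with
  | zero => simp [wpow]
  | succ m ih => rw [wpow, ih, wpow]; simp

theorem wpow_rotate_succ (z : List α) (j q : ℕ) :
    wpow (z.rotate j) (q + 1) = z.drop (j % z.length) ++ wpow z q ++ z.take (j % z.length) := by
  rw [rotate_eq_drop_append_take_mod, wpow_append_succ, take_append_drop]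

theorem capp_wpow_add (f : List α × List α) (z : List α) (a k : ℕ) :
    capp f (wpow z (a + k)) = capp (f.1 ++ wpow z a, f.2) (wpow z k) := by
  simp [capp, wpow_add]

end Words

namespace List.HasPeriod

variable {α : Type*} {w : List α} {p : ℕ}

theorem eq_wpow_append (hw : w.HasPeriod p) (hp : 0 < p) (hpw : p ≤ w.length) :
    w = wpow (w.take p) (w.length / p) ++ (w.take p).take (w.length % p) := by
  have hz : (w.take p).length = p := length_take_of_le hpw
  have hdm : w.length / p * p + w.length % p = w.length := Nat.div_add_mod' w.length p
  have hmod := Nat.mod_lt w.length hp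
  apply ext_getElem?
  intro n
  rcases lt_or_ge n (w.length / p * p) with hn | hn
  · have hnp := Nat.mod_lt n hp
    rw [getElem?_append_left (by rw [length_wpow, hz]; exact hn),
      getElem?_wpow _ (by rw [hz]; exact hn), hz, getElem?_take, if_pos hnp,
      hw.getElem?_mod p n w (by omega)]
  · rw [getElem?_append_right (by rw [length_wpow, hz]; exact hn), length_wpow, hz,
      getElem?_take, getElem?_take]
    rcases lt_or_ge n w.length with hnw | hnw
    · have hq : n / p = w.length / p :=
        Nat.div_eq_of_lt_le hn (by rw [Nat.succ_mul]; omega)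
      have hr : n % p = n - w.length / p * p := by
        have := Nat.div_add_mod' n p; rw [hq] at this; omega
      rw [if_pos (by omega), if_pos (by omega), ← hr, hw.getElem?_mod p n w hnw]
    · rw [if_neg (by omega), getElem?_eq_none hnw]

theorem drop_take_eq_rotate (hw : w.HasPeriod p) {j : ℕ} (h : j + p ≤ w.length) :
    (w.drop j).take p = (w.take p).rotate j := by
  have hz : (w.take p).length = p := length_take_of_le (by omega)
  apply ext_getElem?
  intro n
  rcases lt_or_ge n p with hn | hn
  · rw [getElem?_rotate (by rw [hz]; exact hn), hz, getElem?_take, if_pos hn, getElem?_drop,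
      getElem?_take, if_pos (Nat.mod_lt _ (by omega)), hw.getElem?_mod p _ w (by omega),
      Nat.add_comm]
  · rw [getElem?_eq_none (by simp; omega), getElem?_eq_none (by simp [hz]; omega)]

theorem drop_take_eq_capp (hw : w.HasPeriod p) (hp : 0 < p) {j ℓ : ℕ} (hpℓ : p ≤ ℓ)
    (h : j + ℓ ≤ w.length) :
    (w.drop j).take ℓ =
      capp ((w.take p).drop (j % p),
          (w.take p).take (j % p) ++ ((w.take p).rotate j).take (ℓ % p))
        (wpow (w.take p) (ℓ / p - 1)) := by
  have hz : (w.take p).length = p := length_take_of_le (by omega)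
  have hF : ((w.drop j).take ℓ).HasPeriod p :=
    hw.infix ((take_prefix _ _).isInfix.trans (drop_suffix _ _).isInfix)
  have hFlen : ((w.drop j).take ℓ).length = ℓ := by simp; omega
  have hFz : ((w.drop j).take ℓ).take p = (w.take p).rotate j := by
    rw [take_take, min_eq_left hpℓ, hw.drop_take_eq_rotate (by omega)]
  have hq : ℓ / p = ℓ / p - 1 + 1 := by
    have := (Nat.one_le_div_iff hp).mpr hpℓ; omega
  rw [hF.eq_wpow_append hp (by omega), hFlen, hFz, hq, wpow_rotate_succ, hz, ← hq]
  simp [capp]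

end List.HasPeriod

def PeriodicFrom {α : Type*} (f : ℕ → α) (p N : ℕ) : Prop :=
  ∀ n, N ≤ n → f (n + p) = f n

namespace PeriodicFrom

variable {α : Type*} {f : ℕ → α} {p q N M : ℕ}

theorem add_mul_eq (hf : PeriodicFrom f p N) {n : ℕ} (hn : N ≤ n) (k : ℕ) :
    f (n + k * p) = f n := by
  induction k with
  | zero => simp
  | succ k ih => rw [Nat.succ_mul, ← Nat.add_assoc, hf _ (by omega), ih]

theorem mono (hf : PeriodicFrom f p N) (h : N ≤ M) : PeriodicFrom f p M :=
  fun n hn => hf n (by omega)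

theorem gcd (hp : PeriodicFrom f p N) (hq : PeriodicFrom f q N) (hq0 : 0 < q) :
    PeriodicFrom f (Nat.gcd p q) N := by
  rcases (Nat.gcd_le_right p hq0).lt_or_eq with hlt | heq
  · obtain ⟨m, -, hm⟩ := Nat.exists_mul_mod_eq_gcd hlt
    have hpm : Nat.gcd p q + p * m / q * q = m * p := by
      have := Nat.mod_add_div' (p * m) q; rw [hm] at this; rw [this, Nat.mul_comm]
    intro n hn
    rw [← hq.add_mul_eq (by omega : N ≤ n + Nat.gcd p q) (p * m / q), Nat.add_assoc, hpm,
      hp.add_mul_eq hn]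
  · rwa [heq]

theorem descend (hq : PeriodicFrom f q N) (hp : PeriodicFrom f p M) (hp0 : 0 < p) :
    PeriodicFrom f q M := by
  intro n hn
  have hNp : N ≤ N * p := Nat.le_mul_of_pos_right N hp0
  rw [← hp.add_mul_eq (by omega : M ≤ n + q) N, Nat.add_right_comm,
    hq _ (by omega), hp.add_mul_eq hn]

end PeriodicFrom

/-- `hLR`: `L` and `R` read the same word of length `K + i * (a + e)` from its two ends, on
ranges that overlap more and more as `i` grows. -/
theorem exists_periodicFrom_of_overlap {α : Type*} {L R : ℕ → α} {a e b K q N : ℕ}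
    (ha : 0 < a) (heb : e < b)
    (hLR : ∀ i n m, n + m + 1 = K + i * (a + e) → n < i * a → m < i * b → L n = R m)
    (hR : PeriodicFrom R q N) : ∃ M, PeriodicFrom L q M := by
  set c := q + N + 2
  refine ⟨a * (a * c + K + 1), fun n hn => ?_⟩
  set t := n / a
  set i := t + c
  have hnt : t * a + n % a = n := Nat.div_add_mod' n a
  have hra : n % a < a := Nat.mod_lt n ha
  have ht : a * c + K + 1 ≤ t := (Nat.le_div_iff_mul_le ha).mpr (by rw [Nat.mul_comm]; exact hn)
  have hca : q + N + 2 * a ≤ c * a := by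
    have h1 : q ≤ q * a := Nat.le_mul_of_pos_right q ha
    have h2 : N ≤ N * a := Nat.le_mul_of_pos_right N ha
    have : c * a = q * a + N * a + 2 * a := by simp only [c]; ring
    omega
  have hia : i * a = t * a + c * a := Nat.add_mul t c a
  have hie : i * e + i ≤ i * b := by
    have := Nat.mul_le_mul_left i heb; rwa [Nat.mul_succ] at this
  have hiP : i * (a + e) = i * a + i * e := Nat.mul_add i a e
  have hac : a * c = c * a := Nat.mul_comm a c
  set m := K + i * (a + e) - 1 - n - q
  have hRm : R (m + q) = R m := hR m (by omega)
  rw [hLR i (n + q) m (by omega) (by omega) (by omega),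
    hLR i n (m + q) (by omega) (by omega) (by omega), hRm]

section Pumping

variable {α : Type*}

/-- The infinite word `u v v v ⋯`, letter by letter. -/
def omegaWord (u v : List α) (n : ℕ) : Option α :=
  if n < u.length then u[n]? else v[(n - u.length) % v.length]?

theorem periodicFrom_omegaWord (u v : List α) :
    PeriodicFrom (omegaWord u v) v.length u.length := by
  intro n hn
  simp only [omegaWord, if_neg (by omega : ¬ n + v.length < u.length),
    if_neg (by omega : ¬ n < u.length), Nat.sub_add_comm hn, Nat.add_mod_right]

def pumped (u v w x y : List α) (i : ℕ) : List α :=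
  u ++ wpow v i ++ w ++ wpow x i ++ y

variable {u v w x y : List α}

theorem length_pumped (i : ℕ) : (pumped u v w x y i).length =
    u.length + w.length + y.length + i * (v.length + x.length) := by
  simp only [pumped, length_append, length_wpow]; ring

theorem reverse_pumped (i : ℕ) : (pumped u v w x y i).reverse =
    pumped y.reverse x.reverse w.reverse v.reverse u.reverse i := by
  simp [pumped, reverse_wpow]

theorem getElem?_pumped {i n : ℕ} (hn : n < u.length + i * v.length) :
    (pumped u v w x y i)[n]? = omegaWord u v n := by
  simp only [pumped, List.append_assoc, omegaWord]
  split_ifs with hu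
  · exact getElem?_append_left hu
  · rw [getElem?_append_right (by omega), getElem?_append_left (by rw [length_wpow]; omega),
      getElem?_wpow _ (by omega)]

theorem getElem?_reverse_pumped {i m : ℕ} (hm : m < y.length + i * x.length) :
    (pumped u v w x y i).reverse[m]? = omegaWord y.reverse x.reverse m := by
  rw [reverse_pumped, getElem?_pumped (by simpa using hm)]

theorem take_drop_pumped (N i : ℕ) :
    ((pumped u v w x y (N + i)).drop (u.length + N * v.length)).take
      (wpow v i ++ w ++ wpow x i).length = wpow v i ++ w ++ wpow x i := by
  rw [pumped, wpow_add v N i, Nat.add_comm N i, wpow_add x i N]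
  have : u ++ (wpow v N ++ wpow v i) ++ w ++ (wpow x i ++ wpow x N) ++ y =
      (u ++ wpow v N) ++ ((wpow v i ++ w ++ wpow x i) ++ (wpow x N ++ y)) := by simp
  rw [this, drop_left' (by simp [length_wpow]), take_left' rfl]

theorem take_pumped_succ (i n : ℕ) (hn : n ≤ u.length + v.length) :
    (pumped u v w x y (i + 1)).take n = (u ++ v).take n := by
  have : pumped u v w x y (i + 1) = (u ++ v) ++ (wpow v i ++ w ++ wpow x (i + 1) ++ y) := by
    simp [pumped, wpow]
  rw [this, take_append_of_le_length (by simpa using hn)]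

end Pumping

theorem hasPeriod_extract_of_periodicFrom {α : Type*} {S : List α} {L R : ℕ → Option α}
    {p s G μ ν : ℕ} (hL : ∀ n < p, S[n]? = L n) (hR : ∀ m < s, S.reverse[m]? = R m)
    (hLG : PeriodicFrom L G μ) (hRG : PeriodicFrom R G ν) (hps : S.length + G ≤ p + s) :
    (S.extract μ (S.length - ν)).HasPeriod G := by
  have hR' : ∀ k, k < S.length → S.length < s + k + 1 → S[k]? = R (S.length - 1 - k) := by
    intro k hk hks
    rw [← hR _ (by omega), getElem?_reverse (by omega)]
    congr 1; omega
  rw [hasPeriod_iff_getElem?]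
  intro n hn
  simp only [extract_eq_take_drop, length_take, length_drop] at hn
  rw [extract_eq_take_drop, getElem?_take, getElem?_take, if_pos (by omega), if_pos (by omega),
    getElem?_drop, getElem?_drop, ← Nat.add_assoc]
  rcases lt_or_ge (μ + n + G) p with hp | hp
  · rw [hL _ (by omega), hL _ hp, hLG _ (by omega)]
  · rw [hR' _ (by omega) (by omega), hR' _ (by omega) (by omega),
      ← hRG (S.length - 1 - (μ + n + G)) (by omega)]
    congr 1; omega

section Middle

variable {α : Type*}

theorem exists_capp_wpow_of_hasPeriod {S : ℕ → List α} {u v w x y z : List α}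
    {N μ ν G E : ℕ} (hS : ∀ i, S i = pumped u v w x y (N + i))
    (hW : ∀ i, ((S i).extract μ ((S i).length - ν)).HasPeriod G)
    (hz : ∀ i, ((S i).extract μ ((S i).length - ν)).take G = z)
    (hG : 0 < G) (hE0 : 0 < E) (hE : v.length + x.length = E * G) (hμ : μ ≤ u.length)
    (hν : ν ≤ y.length) :
    ∃ f : List α × List α, ∀ i, 1 ≤ i →
      wpow v i ++ w ++ wpow x i = capp f (wpow z (w.length / G + i * E - 1)) := by
  set c := u.length + N * v.length - μ with hc
  refine ⟨(z.drop (c % G), z.take (c % G) ++ (z.rotate c).take (w.length % G)), fun i hi => ?_⟩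
  have hSlen : (S i).length = u.length + w.length + y.length + (N + i) * (E * G) := by
    rw [hS, length_pumped, hE]
  have hTlen : (wpow v i ++ w ++ wpow x i).length = w.length + i * E * G := by
    simp only [length_append, length_wpow]
    rw [Nat.mul_assoc, ← hE]; ring
  have hNi : (N + i) * (E * G) = N * v.length + N * x.length + i * E * G := by
    rw [Nat.mul_assoc i E G, ← hE]; ring
  have hiE : 1 ≤ i * E := Nat.mul_pos hi hE0
  have hGle : G ≤ i * E * G := Nat.le_mul_of_pos_left G hiE
  have hfactor : (((S i).extract μ ((S i).length - ν)).drop c).take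
      (wpow v i ++ w ++ wpow x i).length = wpow v i ++ w ++ wpow x i := by
    have hmin : (wpow v i ++ w ++ wpow x i).length ≤ (S i).length - ν - μ - c := by omega
    have hμc : μ + c = u.length + N * v.length := by omega
    rw [extract_eq_take_drop, drop_take, take_take, drop_drop, min_eq_left hmin, hμc, hS,
      take_drop_pumped]
  have hcapp := (hW i).drop_take_eq_capp hG (j := c) (ℓ := (wpow v i ++ w ++ wpow x i).length)
    (by omega) (by rw [extract_eq_take_drop, length_take, length_drop]; omega)
  rw [hfactor, hz, hTlen, Nat.add_mul_mod_self_right, Nat.add_mul_div_right _ _ hG] at hcapp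
  exact hcapp

theorem exists_common_capp_wpow {T1 T2 : ℕ → List α} {z : List α} {f1 f2 : List α × List α}
    {A1 A2 E : ℕ} (hE : 0 < E)
    (h1 : ∀ i, 1 ≤ i → T1 i = capp f1 (wpow z (A1 + i * E - 1)))
    (h2 : ∀ i, 1 ≤ i → T2 i = capp f2 (wpow z (A2 + i * E - 1))) :
    ∃ g1 g2 : List α × List α, ∀ i, 1 ≤ i → ∃ k,
      T1 i = capp g1 (wpow z k) ∧ T2 i = capp g2 (wpow z k) := by
  refine ⟨(f1.1 ++ wpow z (A1 - min A1 A2), f1.2), (f2.1 ++ wpow z (A2 - min A1 A2), f2.2),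
    fun i hi => ⟨min A1 A2 + i * E - 1, ?_, ?_⟩⟩
  all_goals
    have hiE : i ≤ i * E := Nat.le_mul_of_pos_right i hE
  · rw [h1 i hi, ← capp_wpow_add]; congr 2; omega
  · rw [h2 i hi, ← capp_wpow_add]; congr 2; omega

end Middle

section Equation

variable {α : Type*} {u1 v1 w1 x1 y1 u2 v2 w2 x2 y2 : List α}

theorem omegaWord_eq_of_pumped_eq
    (h : ∀ i, pumped u1 v1 w1 x1 y1 i = pumped u2 v2 w2 x2 y2 i)
    (hv1 : v1 ≠ []) (hv2 : v2 ≠ []) :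
    omegaWord u1 v1 = omegaWord u2 v2 := by
  funext n
  have hn : ∀ v : List α, v ≠ [] → n < (n + 1) * v.length := fun v hv => by
    have := Nat.le_mul_of_pos_right (n + 1) (length_pos_iff.mpr hv); omega
  rw [← getElem?_pumped (w := w1) (x := x1) (y := y1) (i := n + 1)
    (by have := hn v1 hv1; omega), h, getElem?_pumped (by have := hn v2 hv2; omega)]

theorem pumped_reverse_eq (h : ∀ i, pumped u1 v1 w1 x1 y1 i = pumped u2 v2 w2 x2 y2 i) (i : ℕ) :
    pumped y2.reverse x2.reverse w2.reverse v2.reverse u2.reverse i =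
      pumped y1.reverse x1.reverse w1.reverse v1.reverse u1.reverse i := by
  rw [← reverse_pumped, ← reverse_pumped, h]

theorem periodicFrom_omegaWord_gcd
    (h : ∀ i, pumped u1 v1 w1 x1 y1 i = pumped u2 v2 w2 x2 y2 i)
    (hv2 : v2 ≠ []) (hx1 : x1 ≠ [])
    (hlen : v1.length + x1.length = v2.length + x2.length) (hlt : v2.length < v1.length) :
    PeriodicFrom (omegaWord u1 v1)
      (Nat.gcd (Nat.gcd v1.length v2.length) (Nat.gcd x1.length x2.length))
      (min u1.length u2.length) := by
  have ha2 : 0 < v2.length := length_pos_iff.mpr hv2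
  have hb1 : 0 < x1.length := length_pos_iff.mpr hx1
  have hv1 : v1 ≠ [] := ne_nil_of_length_pos (by omega)
  have hx2 : x2 ≠ [] := ne_nil_of_length_pos (by omega)
  have hL1 := periodicFrom_omegaWord u1 v1
  have hL2 : PeriodicFrom (omegaWord u1 v1) v2.length u2.length := by
    rw [omegaWord_eq_of_pumped_eq h hv1 hv2]; exact periodicFrom_omegaWord u2 v2
  have hR2 : PeriodicFrom (omegaWord y2.reverse x2.reverse) x2.length y2.length := by
    simpa using periodicFrom_omegaWord y2.reverse x2.reverse
  have hR1 : PeriodicFrom (omegaWord y2.reverse x2.reverse) x1.length y1.length := by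
    rw [omegaWord_eq_of_pumped_eq (pumped_reverse_eq h) (by simpa using hx2) (by simpa using hx1)]
    simpa using periodicFrom_omegaWord y1.reverse x1.reverse
  have hLR : ∀ i n m,
      n + m + 1 = u1.length + w1.length + y1.length + i * (v1.length + x1.length) →
      n < i * v1.length → m < i * x2.length →
      omegaWord u1 v1 n = omegaWord y2.reverse x2.reverse m := by
    intro i n m hnm hn hm
    rw [← getElem?_pumped (w := w1) (x := x1) (y := y1) (i := i) (by omega),
      ← getElem?_reverse_pumped (u := u2) (v := v2) (w := w2) (i := i) (by omega), ← h,
      getElem?_reverse (by rw [length_pumped]; omega), length_pumped]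
    congr 1; omega
  obtain ⟨M1, hM1⟩ := exists_periodicFrom_of_overlap (by omega) (by omega) hLR hR1
  obtain ⟨M2, hM2⟩ := exists_periodicFrom_of_overlap (by omega) (by omega) hLR hR2
  have hG : PeriodicFrom (omegaWord u1 v1)
      (Nat.gcd (Nat.gcd v1.length v2.length) (Nat.gcd x1.length x2.length))
      (u1.length + u2.length + M1 + M2) :=
    ((hL1.mono (by omega)).gcd (hL2.mono (by omega)) ha2).gcd
      ((hM1.mono (by omega)).gcd (hM2.mono (by omega)) (by omega))
      (Nat.gcd_pos_of_pos_right _ (by omega))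
  rcases min_choice u1.length u2.length with hμ | hμ <;> rw [hμ]
  · exact hG.descend hL1 (by omega)
  · exact hG.descend hL2 ha2

theorem exists_capp_wpow_of_length_lt
    (h : ∀ i, pumped u1 v1 w1 x1 y1 i = pumped u2 v2 w2 x2 y2 i)
    (hv2 : v2 ≠ []) (hx1 : x1 ≠ [])
    (hlen : v1.length + x1.length = v2.length + x2.length) (hlt : v2.length < v1.length) :
    ∃ x : List α, x ≠ [] ∧ ∃ f1 f2 : List α × List α, ∀ i, 1 ≤ i → ∃ k,
      wpow v1 i ++ w1 ++ wpow x1 i = capp f1 (wpow x k) ∧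
      wpow v2 i ++ w2 ++ wpow x2 i = capp f2 (wpow x k) := by
  set G := Nat.gcd (Nat.gcd v1.length v2.length) (Nat.gcd x1.length x2.length)
  set μ := min u1.length u2.length
  set ν := min y1.length y2.length
  -- from `N` on, the readings of `S i` by the two infinite words overlap in at least `G` letters
  set N := u1.length + w1.length + y1.length + G + 1
  set S := fun i => pumped u1 v1 w1 x1 y1 (N + i)
  set z := ((u1 ++ v1).drop μ).take G
  have hG : 0 < G := Nat.gcd_pos_of_pos_left _ (Nat.gcd_pos_of_pos_left _ (by omega))
  have hGv1 : G ∣ v1.length := (Nat.gcd_dvd_left _ _).trans (Nat.gcd_dvd_left _ _)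
  have hGP : G ∣ v1.length + x1.length :=
    dvd_add hGv1 ((Nat.gcd_dvd_right _ _).trans (Nat.gcd_dvd_left _ _))
  have hGa1 : G ≤ v1.length := Nat.le_of_dvd (by omega) hGv1
  have hE := (Nat.div_mul_cancel hGP).symm
  have hE0 : 0 < (v1.length + x1.length) / G := Nat.div_pos (by omega) hG
  have hLG : PeriodicFrom (omegaWord u1 v1) G μ := periodicFrom_omegaWord_gcd h hv2 hx1 hlen hlt
  have hRG : PeriodicFrom (omegaWord y2.reverse x2.reverse) G ν := by
    have := periodicFrom_omegaWord_gcd (pumped_reverse_eq h) (by simpa using hx1)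
      (by simpa using hv2) (by simp; omega) (by simp; omega)
    simp only [length_reverse] at this
    rwa [Nat.gcd_comm x2.length, Nat.gcd_comm v2.length, Nat.gcd_comm, min_comm] at this
  have hW : ∀ i, ((S i).extract μ ((S i).length - ν)).HasPeriod G := by
    intro i
    have hb : (N + i) * x1.length + (N + i) ≤ (N + i) * x2.length := by
      have := Nat.mul_le_mul_left (N + i) (show x1.length + 1 ≤ x2.length by omega)
      rwa [Nat.mul_succ] at this
    refine hasPeriod_extract_of_periodicFrom (p := u1.length + (N + i) * v1.length)
      (s := y2.length + (N + i) * x2.length) (fun n hn => getElem?_pumped hn)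
      (fun m hm => by rw [show S i = _ from h (N + i)]; exact getElem?_reverse_pumped hm)
      hLG hRG ?_
    rw [length_pumped, Nat.mul_add]
    omega
  have hz : ∀ i, ((S i).extract μ ((S i).length - ν)).take G = z := by
    intro i
    have hSi : S i = pumped u1 v1 w1 x1 y1 (N - 1 + i + 1) := by simp only [S]; congr 1; omega
    have hGS : G ≤ (S i).length - ν - μ := by
      rw [hSi, length_pumped]
      have := Nat.le_mul_of_pos_left (v1.length + x1.length) (by omega : 0 < N - 1 + i + 1)
      omega
    rw [extract_eq_take_drop, take_take, min_eq_left hGS, take_drop, hSi,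
      take_pumped_succ _ _ (by omega), ← take_drop]
  obtain ⟨f1, h1⟩ := exists_capp_wpow_of_hasPeriod (fun i => rfl) hW hz hG hE0 hE
    (min_le_left _ _) (min_le_left _ _)
  obtain ⟨f2, h2⟩ := exists_capp_wpow_of_hasPeriod (fun i => h (N + i)) hW hz hG hE0
    (hlen ▸ hE) (min_le_right _ _) (min_le_right _ _)
  refine ⟨z, ?_, exists_common_capp_wpow hE0 h1 h2⟩
  rw [← length_pos_iff, length_take, length_drop, length_append]
  omega

end Equation

theorem comb_2_2_unbalanced_general {B : Type*} (u1 w1 y1 u2 w2 y2 v1 x1 v2 x2 : List B)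
    (hv1 : v1 ≠ []) (hx1 : x1 ≠ []) (hv2 : v2 ≠ []) (hx2 : x2 ≠ [])
    (hlen : v1.length + x1.length = v2.length + x2.length)
    (hne1 : v1.length ≠ v2.length)
    (h : ∀ i : ℕ,
      u1 ++ wpow v1 i ++ w1 ++ wpow x1 i ++ y1 =
        u2 ++ wpow v2 i ++ w2 ++ wpow x2 i ++ y2) :
    ∃ x : List B, x ≠ [] ∧ ∃ f1 f2 : List B × List B,
      ∀ i : ℕ, 1 ≤ i → ∃ k : ℕ,
        wpow v1 i ++ w1 ++ wpow x1 i = capp f1 (wpow x k) ∧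
        wpow v2 i ++ w2 ++ wpow x2 i = capp f2 (wpow x k) := by
  rcases Nat.lt_or_gt_of_ne hne1 with hlt | hlt
  · obtain ⟨x, hx, f2, f1, hf⟩ := exists_capp_wpow_of_length_lt (fun i => (h i).symm) hv1 hx2
      hlen.symm hlt
    exact ⟨x, hx, f1, f2, fun i hi => (hf i hi).imp fun _ ⟨h2, h1⟩ => ⟨h1, h2⟩⟩
  · exact exists_capp_wpow_of_length_lt h hv2 hx1 hlen hlt

theorem comb_2_2_unbalanced {B : Type*} (u1 w1 y1 u2 w2 y2 v1 x1 v2 x2 : List B)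
    (hv1 : v1 ≠ []) (hx1 : x1 ≠ []) (hv2 : v2 ≠ []) (hx2 : x2 ≠ [])
    (hlen : v1.length + x1.length = v2.length + x2.length)
    (hne1 : v1.length ≠ v2.length) (hne2 : x1.length ≠ x2.length)
    (h : ∀ i : ℕ,
      u1 ++ wpow v1 i ++ w1 ++ wpow x1 i ++ y1 =
        u2 ++ wpow v2 i ++ w2 ++ wpow x2 i ++ y2) :
    ∃ x : List B, x ≠ [] ∧ ∃ f1 f2 : List B × List B,
      ∀ i : ℕ, 1 ≤ i → ∃ k : ℕ,
        wpow v1 i ++ w1 ++ wpow x1 i = capp f1 (wpow x k) ∧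
        wpow v2 i ++ w2 ++ wpow x2 i = capp f2 (wpow x k) :=
  comb_2_2_unbalanced_general u1 w1 y1 u2 w2 y2 v1 x1 v2 x2 hv1 hx1 hv2 hx2 hlen hne1 h
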